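/- arXiv:2004.00106 — 5 statements merged into one kernel-verified Lean document; each statement's English description precedes it below -/
import Mathlib

section
/- For every positive integer M and every real ν with 2M−1 < ν < 2M, the series β(−ν) = Σ_{k=0}^∞ (−1)^k/(−ν + k) is positive. -/
/-!
Group the series in consecutive pairs: the pair with indices `2j, 2j + 1` is
`1 / (2j - ν) - 1 / (2j + 1 - ν) = 1 / ((2j - ν) (2j + 1 - ν))`, which is positive because
`ν ∈ (2M - 1, 2M)` never lies between `2j` and `2j + 1`. Hence the even partial sums increase
strictly from `0`, and their limit `β(-ν)` is positive.
-/

open Filter Finset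

theorem sum_range_two_mul_neg_one_pow_mul {R : Type*} [CommRing R] (f : ℕ → R) (n : ℕ) :
    ∑ k ∈ range (2 * n), (-1) ^ k * f k = ∑ j ∈ range n, (f (2 * j) - f (2 * j + 1)) := by
  induction n with
  | zero => simp
  | succ n ih =>
    rw [show 2 * (n + 1) = 2 * n + 1 + 1 by ring, sum_range_succ, sum_range_succ, ih,
      sum_range_succ, pow_succ, pow_mul]
    ring

theorem pos_of_tendsto_sum_neg_one_pow_mul {f : ℕ → ℝ} {b : ℝ}
    (hanti : ∀ j, f (2 * j + 1) ≤ f (2 * j)) (h01 : f 1 < f 0)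
    (hb : Tendsto (fun N => ∑ k ∈ range N, (-1) ^ k * f k) atTop (nhds b)) : 0 < b := by
  set S : ℕ → ℝ := fun n => ∑ j ∈ range n, (f (2 * j) - f (2 * j + 1))
  have hS_mono : Monotone S :=
    monotone_nat_of_le_succ fun n => by
      simpa only [S, sum_range_succ, le_add_iff_nonneg_right, sub_nonneg] using hanti n
  have hS_tendsto : Tendsto S atTop (nhds b) := by
    have h2 : Tendsto (fun n : ℕ => 2 * n) atTop atTop := tendsto_id.const_mul_atTop' two_pos
    simpa only [Function.comp_def, sum_range_two_mul_neg_one_pow_mul] using hb.comp h2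
  calc 0 < S 1 := by simpa [S] using h01
    _ ≤ b := hS_mono.ge_of_tendsto hS_tendsto 1

theorem inv_neg_add_add_one_lt {a ν : ℝ} (h : ν ∉ Set.Icc a (a + 1)) :
    (-ν + (a + 1))⁻¹ < (-ν + a)⁻¹ := by
  rcases lt_or_ge ν a with hν | hν
  · exact inv_strictAnti₀ (by linarith) (by linarith)
  · have : a + 1 < ν := lt_of_not_ge fun h' => h ⟨hν, h'⟩
    exact (inv_lt_inv_of_neg (by linarith) (by linarith)).2 (by linarith)

theorem notMem_Icc_of_mem_Ioo {m n : ℤ} {ν : ℝ} (hν : ν ∈ Set.Ioo ((m : ℝ) - 1) m)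
    (hnm : n ≠ m - 1) : ν ∉ Set.Icc (n : ℝ) (n + 1) := by
  rintro ⟨hn, hn1⟩
  obtain ⟨hm1, hm⟩ := hν
  rcases lt_or_gt_of_ne hnm with h | h
  · have : (n : ℝ) + 1 ≤ m - 1 := by exact_mod_cast (by omega : n + 1 ≤ m - 1)
    linarith
  · have : (m : ℝ) ≤ n := by exact_mod_cast (by omega : m ≤ n)
    linarith

theorem beta_pos_of_mem_odd_even_interval_general (M : ℕ) (ν : ℝ)
    (h1 : 2 * (M : ℝ) - 1 < ν) (h2 : ν < 2 * (M : ℝ)) (b : ℝ)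
    (hb : Tendsto (fun N => ∑ k ∈ Finset.range N, (-1 : ℝ) ^ k / (-ν + k))
      atTop (nhds b)) : 0 < b := by
  have hgap (j : ℕ) : ν ∉ Set.Icc ((2 * j : ℕ) : ℝ) ((2 * j : ℕ) + 1) := by
    have hν : ν ∈ Set.Ioo (((2 * M : ℤ) : ℝ) - 1) ((2 * M : ℤ) : ℝ) := by
      push_cast
      exact ⟨h1, h2⟩
    exact_mod_cast notMem_Icc_of_mem_Ioo (n := 2 * j) hν (by omega)
  have hstep (j : ℕ) : (-ν + ((2 * j + 1 : ℕ) : ℝ))⁻¹ < (-ν + ((2 * j : ℕ) : ℝ))⁻¹ := by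
    simpa only [Nat.cast_succ] using inv_neg_add_add_one_lt (hgap j)
  refine pos_of_tendsto_sum_neg_one_pow_mul (f := fun k : ℕ => (-ν + k)⁻¹)
    (fun j => (hstep j).le) (by simpa using hstep 0) ?_
  simpa only [div_eq_mul_inv] using hb

theorem beta_pos_of_mem_odd_even_interval (M : ℕ) (hM : 1 ≤ M) (ν : ℝ)
    (h1 : 2 * (M : ℝ) - 1 < ν) (h2 : ν < 2 * (M : ℝ)) (b : ℝ)
    (hb : Tendsto (fun N => ∑ k ∈ Finset.range N, (-1 : ℝ) ^ k / (-ν + k))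
      atTop (nhds b)) : 0 < b :=
  beta_pos_of_mem_odd_even_interval_general M ν h1 h2 b hb
end

section
/- For every positive integer M and every real ν with 2M−2 < ν < 2M−1, the series β(−ν) = Σ_{k=0}^∞ (−1)^k/(−ν + k) is negative. -/
/-!
Group the odd-length partial sums as `-1/ν + ∑_{j<n} (1/(2j+2-ν) - 1/(2j+1-ν))`. Since `ν` lies
strictly between an even integer and the next odd one, it never lies in `[2j+1, 2j+2]`, so both
denominators of each pair have the same sign and the pair is `≤ 0`. Hence every odd-length partial
sum, and therefore the limit, is at most `-1/ν < 0`.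
-/

open Filter Finset

theorem sum_range_two_mul_add_one_le {α : Type*} [AddCommMonoid α] [PartialOrder α]
    [IsOrderedAddMonoid α] (f : ℕ → α) (hpair : ∀ j, f (2 * j + 1) + f (2 * j + 2) ≤ 0) (n : ℕ) :
    ∑ k ∈ range (2 * n + 1), f k ≤ f 0 := by
  induction n with
  | zero => simp
  | succ n ih =>
    calc ∑ k ∈ range (2 * (n + 1) + 1), f k
        = ∑ k ∈ range (2 * n + 1), f k + (f (2 * n + 1) + f (2 * n + 2)) := by
          rw [show 2 * (n + 1) + 1 = 2 * n + 1 + 1 + 1 by ring, sum_range_succ, sum_range_succ,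
            add_assoc]
      _ ≤ f 0 + 0 := add_le_add ih (hpair n)
      _ = f 0 := add_zero _

theorem inv_add_one_sub_inv_nonpos {x : ℝ} (hx : x ∉ Set.Icc (-1) 0) : (x + 1)⁻¹ - x⁻¹ ≤ 0 := by
  rw [Set.mem_Icc, not_and_or, not_le, not_le] at hx
  rcases hx with hx | hx
  · exact sub_nonpos.2 ((inv_le_inv_of_neg (by linarith) (by linarith)).2 (by linarith))
  · exact sub_nonpos.2 (inv_anti₀ hx (by linarith))

theorem notMem_Icc_odd_of_mem_Ioo_even {ν : ℝ} {m : ℤ} (h1 : 2 * (m : ℝ) < ν)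
    (h2 : ν < 2 * m + 1) (j : ℤ) : ν ∉ Set.Icc (2 * (j : ℝ) + 1) (2 * j + 2) := by
  rintro ⟨hj1, hj2⟩
  have hlt : m < j + 1 := by exact_mod_cast (by linarith : (m : ℝ) < j + 1)
  have hgt : j < m := by exact_mod_cast (by linarith : (j : ℝ) < m)
  omega

theorem beta_neg_of_mem_even_odd_interval (M : ℕ) (hM : 1 ≤ M) (ν : ℝ)
    (h1 : 2 * (M : ℝ) - 2 < ν) (h2 : ν < 2 * (M : ℝ) - 1) (b : ℝ)
    (hb : Tendsto (fun N => ∑ k ∈ Finset.range N, (-1 : ℝ) ^ k / (-ν + k))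
      atTop (nhds b)) : b < 0 := by
  have hν : 0 < ν := by
    have : (1 : ℝ) ≤ M := by exact_mod_cast hM
    linarith
  have hpair (j : ℕ) : (-1 : ℝ) ^ (2 * j + 1) / (-ν + ↑(2 * j + 1))
      + (-1 : ℝ) ^ (2 * j + 2) / (-ν + ↑(2 * j + 2)) ≤ 0 := by
    have hgap := notMem_Icc_odd_of_mem_Ioo_even (m := (M : ℤ) - 1) (by push_cast; linarith)
      (by push_cast; linarith) j
    have hx : (2 * j + 1 - ν : ℝ) ∉ Set.Icc (-1) 0 := fun ⟨hl, hr⟩ ↦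
      hgap ⟨by push_cast; linarith, by push_cast; linarith⟩
    convert inv_add_one_sub_inv_nonpos hx using 1
    simp only [pow_succ, pow_mul]
    push_cast
    ring
  have hodd : Tendsto (fun n : ℕ ↦ 2 * n + 1) atTop atTop :=
    StrictMono.tendsto_atTop fun a b h ↦ by omega
  have hle : b ≤ -ν⁻¹ := by
    refine le_of_tendsto (hb.comp hodd) (Eventually.of_forall fun n ↦ ?_)
    simpa using sum_range_two_mul_add_one_le (fun k : ℕ ↦ (-1 : ℝ) ^ k / (-ν + k)) hpair n
  linarith [inv_pos.2 hν]
end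

section
/- For every real ν that is not a nonnegative integer, the sign of Γ(−ν) equals the sign of β(−ν); in particular Γ(−ν)·β(−ν) > 0. -/
/-!
With `x = -ν` and `n = ⌈ν⌉₊` we have `x + k < 0` for `k < n` and `x + n > 0`. The recurrence
`Γ(x + 1) = x Γ(x)` applied `n` times gives `(-1)ⁿ Γ(x) > 0`. In `(-1)ⁿ β(x)`, the terms with `k ≥ n`
form an alternating series of decreasing positive terms `1 / (x + k)`, so their sum is positive,
and the `n` terms with `k < n`, read from `k = n - 1` downwards, form an alternating sum of
decreasing positive terms `1 / |x + k|`, so it is nonnegative. Hence `(-1)ⁿ β(x) > 0` too.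
-/

open Filter Finset Real Topology

theorem alternating_sum_range_succ_mem_Icc {R : Type*} [CommRing R] [PartialOrder R]
    [IsOrderedAddMonoid R] (d : ℕ → R) (n : ℕ) (h0 : 0 ≤ d 0) (hd : ∀ k < n, d k ≤ d (k + 1)) :
    (-1) ^ n * ∑ k ∈ range (n + 1), (-1) ^ k * d k ∈ Set.Icc 0 (d n) := by
  induction n with
  | zero => simpa using h0
  | succ n ih =>
    obtain ⟨hlo, hhi⟩ := ih fun k hk => hd k (by omega)
    have hstep := hd n n.lt_succ_self
    have hpeel : (-1) ^ (n + 1) * ∑ k ∈ range (n + 1 + 1), (-1) ^ k * d k =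
        d (n + 1) - (-1) ^ n * ∑ k ∈ range (n + 1), (-1) ^ k * d k := by
      rw [sum_range_succ, mul_add, ← mul_assoc, ← pow_add, Even.neg_one_pow ⟨n + 1, rfl⟩]
      ring
    rw [hpeel]
    exact ⟨sub_nonneg.2 (hhi.trans hstep), sub_le_self _ hlo⟩

theorem alternating_series_pos {E : Type*} [Ring E] [PartialOrder E] [IsOrderedRing E]
    [TopologicalSpace E] [OrderClosedTopology E] {f : ℕ → E} {l : E}
    (hfl : Tendsto (fun n ↦ ∑ i ∈ range n, (-1) ^ i * f i) atTop (𝓝 l))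
    (hfa : Antitone f) (h01 : f 1 < f 0) : 0 < l := by
  have h := hfa.alternating_series_le_tendsto hfl 1
  norm_num [sum_range_succ] at h
  simpa using h01.trans_le h

theorem Real.neg_one_pow_mul_Gamma_pos (n : ℕ) {x : ℝ} (hpos : 0 < x + n)
    (hneg : ∀ k < n, x + k < 0) : 0 < (-1) ^ n * Gamma x := by
  induction n generalizing x with
  | zero => simpa using Gamma_pos_of_pos (by simpa using hpos)
  | succ n ih =>
    have hx : x < 0 := by simpa using hneg 0 n.succ_pos
    have h := ih (x := x + 1) (by push_cast at hpos; linarith) fun k hk => by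
      have := hneg (k + 1) (by omega)
      push_cast at this
      linarith
    rw [Gamma_add_one hx.ne] at h
    have hsplit : (-1) ^ (n + 1) * Gamma x * -x = (-1) ^ n * (x * Gamma x) := by ring
    exact pos_of_mul_pos_left (hsplit ▸ h) (neg_nonneg.2 hx.le)

theorem neg_one_pow_mul_sum_range_div_nonneg {x : ℝ} (n : ℕ) (hneg : ∀ k < n, x + k < 0) :
    0 ≤ (-1) ^ n * ∑ k ∈ range n, (-1) ^ k / (x + k) := by
  cases n with
  | zero => simp
  | succ m =>
    have hd0 : 0 ≤ -1 / (x + (0 : ℕ)) :=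
      div_nonneg_of_nonpos (by norm_num) (hneg 0 m.succ_pos).le
    have hd : ∀ k < m, -1 / (x + k) ≤ -1 / (x + (k + 1 : ℕ)) := fun k hk => by
      have := hneg (k + 1) (by omega)
      rw [neg_div, neg_div, neg_le_neg_iff]
      exact one_div_le_one_div_of_neg_of_le this (by push_cast; linarith)
    have hflip : (-1) ^ (m + 1) * ∑ k ∈ range (m + 1), (-1) ^ k / (x + k) =
        (-1) ^ m * ∑ k ∈ range (m + 1), (-1) ^ k * (-1 / (x + k)) := by
      rw [pow_succ, mul_assoc, neg_one_mul, ← sum_neg_distrib]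
      exact congrArg _ (sum_congr rfl fun k _ => by ring)
    rw [hflip]
    exact (alternating_sum_range_succ_mem_Icc (fun k => -1 / (x + k)) m hd0 hd).1

theorem neg_one_pow_mul_pos_of_tendsto_sum_range_div {x b : ℝ} (n : ℕ) (hpos : 0 < x + n)
    (hneg : ∀ k < n, x + k < 0)
    (hb : Tendsto (fun N => ∑ k ∈ range N, (-1 : ℝ) ^ k / (x + k)) atTop (𝓝 b)) :
    0 < (-1) ^ n * b := by
  set F := ∑ k ∈ range n, (-1 : ℝ) ^ k / (x + k)
  have htail : Tendsto (fun M => ∑ k ∈ range M, (-1 : ℝ) ^ k * (1 / (x + n + k))) atTop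
      (𝓝 ((-1) ^ n * (b - F))) := by
    refine ((((tendsto_add_atTop_iff_nat n).2 hb).sub_const F).const_mul ((-1) ^ n)).congr
      fun M => ?_
    rw [add_comm M n, sum_range_add, add_sub_cancel_left, mul_sum]
    refine sum_congr rfl fun k _ => ?_
    rw [pow_add, mul_div_assoc, ← mul_assoc, ← pow_add, Even.neg_one_pow ⟨n, rfl⟩]
    push_cast
    ring
  have hterm_pos : ∀ k : ℕ, 0 < x + n + k := fun k => by positivity
  have hanti : Antitone fun k : ℕ => 1 / (x + n + k) := antitone_nat_of_succ_le fun k =>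
    one_div_le_one_div_of_le (hterm_pos k) (by push_cast; linarith)
  have htail_pos := alternating_series_pos htail hanti
    (one_div_lt_one_div_of_lt (hterm_pos 0) (by push_cast; linarith))
  have hhead := neg_one_pow_mul_sum_range_div_nonneg n hneg
  linarith [mul_sub ((-1 : ℝ) ^ n) b F]

theorem gamma_beta_same_sign (ν : ℝ) (hν : ∀ n : ℕ, ν ≠ n) (b : ℝ)
    (hb : Tendsto (fun N => ∑ k ∈ Finset.range N, (-1 : ℝ) ^ k / (-ν + k))
      atTop (nhds b)) : 0 < Real.Gamma (-ν) * b := by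
  set n := ⌈ν⌉₊
  have hpos : 0 < -ν + n := by linarith [(Nat.le_ceil ν).lt_of_ne (hν n)]
  have hneg : ∀ k < n, -ν + k < 0 := fun k hk => by linarith [Nat.lt_ceil.1 hk]
  have h := mul_pos (neg_one_pow_mul_Gamma_pos n hpos hneg)
    (neg_one_pow_mul_pos_of_tendsto_sum_range_div n hpos hneg hb)
  rwa [mul_mul_mul_comm, ← pow_add, Even.neg_one_pow ⟨n, rfl⟩, one_mul] at h
end

section
/- The function y(ν) = Γ((1−ν)/2)/Γ(−ν/2) is strictly decreasing on the interval (−∞, 1). -/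
open Real

/-- `y ν = Γ((1-ν)/2) / Γ(-ν/2)`. -/
noncomputable def y (ν : ℝ) : ℝ := Real.Gamma ((1 - ν) / 2) / Real.Gamma (-ν / 2)

/-!
With `x = -ν/2` we have `y ν = Γ(x + 1/2) / Γ(x)`, so it suffices that `x ↦ Γ(x + s) / Γ(x)` is
strictly increasing on `(-s, ∞)` for `0 < s < 1`. For `x > 0` this is the reciprocal of
`Γ(x) / Γ(x + s) = B(x, s) / Γ(s)`, and the Beta integral `∫₀¹ t^(x-1) (1-t)^(s-1) dt` strictly
decreases in `x`. For `-s < x ≤ 0` the functional equation gives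
`Γ(x + s) / Γ(x) = x · Γ(x + s) / Γ(x + 1)`, a nonpositive increasing factor times a positive
decreasing one (the previous case with shift `1 - s`).
-/

open Set MeasureTheory

noncomputable def realBetaIntegral (u v : ℝ) : ℝ :=
  ∫ t in (0 : ℝ)..1, t ^ (u - 1) * (1 - t) ^ (v - 1)

lemma ofReal_betaIntegrand_eqOn (u v : ℝ) :
    EqOn (fun t : ℝ => ((t ^ (u - 1) * (1 - t) ^ (v - 1) : ℝ) : ℂ))
      (fun t : ℝ => (t : ℂ) ^ ((u : ℂ) - 1) * (1 - (t : ℂ)) ^ ((v : ℂ) - 1)) (Icc 0 1) := by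
  intro t ht
  simp only [Complex.ofReal_mul, Complex.ofReal_cpow ht.1, Complex.ofReal_cpow (sub_nonneg.2 ht.2)]
  push_cast
  rfl

lemma ofReal_realBetaIntegral (u v : ℝ) :
    (realBetaIntegral u v : ℂ) = Complex.betaIntegral u v := by
  rw [realBetaIntegral, ← intervalIntegral.integral_ofReal]
  refine intervalIntegral.integral_congr ?_
  rw [uIcc_of_le zero_le_one]
  exact ofReal_betaIntegrand_eqOn u v

lemma intervalIntegrable_betaIntegrand {u v : ℝ} (hu : 0 < u) (hv : 0 < v) :
    IntervalIntegrable (fun t : ℝ => t ^ (u - 1) * (1 - t) ^ (v - 1)) volume 0 1 := by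
  refine ((Complex.betaIntegral_convergent (u := u) (v := v) (by simpa) (by simpa)).norm).congr
    fun t ht => ?_
  rw [uIoc_of_le zero_le_one] at ht
  have h := ofReal_betaIntegrand_eqOn u v (Ioc_subset_Icc_self ht)
  dsimp only at h
  rw [← h, Complex.norm_real, norm_of_nonneg
    (mul_nonneg (rpow_nonneg ht.1.le _) (rpow_nonneg (sub_nonneg.2 ht.2) _))]

lemma Gamma_mul_Gamma_eq_realBetaIntegral {u v : ℝ} (hu : 0 < u) (hv : 0 < v) :
    Gamma u * Gamma v = Gamma (u + v) * realBetaIntegral u v := by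
  have h := Complex.Gamma_mul_Gamma_eq_betaIntegral (s := u) (t := v) (by simpa) (by simpa)
  rw [← ofReal_realBetaIntegral, ← Complex.ofReal_add, Complex.Gamma_ofReal, Complex.Gamma_ofReal,
    Complex.Gamma_ofReal] at h
  exact_mod_cast h

lemma realBetaIntegral_strictAntiOn {v : ℝ} (hv : 0 < v) :
    StrictAntiOn (fun u => realBetaIntegral u v) (Ioi 0) := by
  intro u₁ hu₁ u₂ hu₂ hu
  have hpos := intervalIntegral.intervalIntegral_pos_of_pos_on
    ((intervalIntegrable_betaIntegrand hu₁ hv).sub (intervalIntegrable_betaIntegrand hu₂ hv))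
    (fun t ht => ?_) zero_lt_one
  · rw [intervalIntegral.integral_sub (intervalIntegrable_betaIntegrand hu₁ hv)
      (intervalIntegrable_betaIntegrand hu₂ hv)] at hpos
    exact sub_pos.1 hpos
  · have hpow : t ^ (u₂ - 1) < t ^ (u₁ - 1) :=
      rpow_lt_rpow_of_exponent_gt ht.1 ht.2 (by linarith)
    have hfac : 0 < (1 - t) ^ (v - 1) := rpow_pos_of_pos (sub_pos.2 ht.2) _
    simpa only [sub_pos] using mul_lt_mul_of_pos_right hpow hfac

lemma Gamma_div_Gamma_add_strictAntiOn {s : ℝ} (hs : 0 < s) :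
    StrictAntiOn (fun x => Gamma x / Gamma (x + s)) (Ioi 0) := by
  have hbeta : ∀ x ∈ Ioi (0 : ℝ), Gamma x / Gamma (x + s) = realBetaIntegral x s / Gamma s := by
    intro x hx
    have hGs := (Gamma_pos_of_pos hs).ne'
    have hGxs := (Gamma_pos_of_pos (add_pos hx hs)).ne'
    rw [div_eq_div_iff hGxs hGs, Gamma_mul_Gamma_eq_realBetaIntegral hx hs, mul_comm]
  intro x₁ hx₁ x₂ hx₂ hx
  simp only [hbeta x₁ hx₁, hbeta x₂ hx₂]
  exact div_lt_div_of_pos_right (realBetaIntegral_strictAntiOn hs hx₁ hx₂ hx) (Gamma_pos_of_pos hs)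

lemma Gamma_add_div_Gamma_strictMonoOn {s : ℝ} (hs : 0 < s) :
    StrictMonoOn (fun x => Gamma (x + s) / Gamma x) (Ioi 0) := by
  intro x₁ hx₁ x₂ hx₂ hx
  have hpos : ∀ x ∈ Ioi (0 : ℝ), 0 < Gamma x / Gamma (x + s) := fun x hx =>
    div_pos (Gamma_pos_of_pos hx) (Gamma_pos_of_pos (add_pos hx hs))
  simp only [← inv_div (Gamma x₁), ← inv_div (Gamma x₂)]
  exact (inv_lt_inv₀ (hpos x₁ hx₁) (hpos x₂ hx₂)).2 (Gamma_div_Gamma_add_strictAntiOn hs hx₁ hx₂ hx)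

/-- At `x = 0` both sides vanish, as `Gamma 0 = 0`. -/
lemma Gamma_add_div_Gamma_eq_mul (s x : ℝ) :
    Gamma (x + s) / Gamma x = x * (Gamma (x + s) / Gamma (x + 1)) := by
  rcases eq_or_ne x 0 with rfl | hx
  · simp
  · rw [Gamma_add_one hx, ← mul_div_assoc, mul_div_mul_left _ _ hx]

lemma Gamma_add_div_Gamma_strictMonoOn_Ioi_neg {s : ℝ} (hs₀ : 0 < s) (hs₁ : s < 1) :
    StrictMonoOn (fun x => Gamma (x + s) / Gamma x) (Ioi (-s)) := by
  set g : ℝ → ℝ := fun z => Gamma z / Gamma (z + (1 - s))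
  have hf : ∀ x, Gamma (x + s) / Gamma x = x * g (x + s) := fun x => by
    simp only [g, Gamma_add_div_Gamma_eq_mul, show x + s + (1 - s) = x + 1 by ring]
  have hg_pos : ∀ x ∈ Ioi (-s), 0 < g (x + s) := fun x hx => by
    have : 0 < x + s := neg_lt_iff_pos_add.1 hx
    exact div_pos (Gamma_pos_of_pos this) (Gamma_pos_of_pos (by linarith))
  have hg_anti : StrictAntiOn (fun x => g (x + s)) (Ioi (-s)) := fun x₁ hx₁ x₂ hx₂ hx =>
    Gamma_div_Gamma_add_strictAntiOn (sub_pos.2 hs₁) (mem_Ioi.2 (neg_lt_iff_pos_add.1 hx₁))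
      (mem_Ioi.2 (neg_lt_iff_pos_add.1 hx₂)) (by linarith)
  intro x₁ hx₁ x₂ hx₂ hx
  simp only [hf]
  rcases le_or_gt x₂ 0 with hx₂0 | hx₂0
  · calc x₁ * g (x₁ + s) < x₂ * g (x₁ + s) := mul_lt_mul_of_pos_right hx (hg_pos x₁ hx₁)
      _ ≤ x₂ * g (x₂ + s) := mul_le_mul_of_nonpos_left (hg_anti hx₁ hx₂ hx).le hx₂0
  rcases le_or_gt x₁ 0 with hx₁0 | hx₁0
  · exact (mul_nonpos_of_nonpos_of_nonneg hx₁0 (hg_pos x₁ hx₁).le).trans_lt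
      (mul_pos hx₂0 (hg_pos x₂ hx₂))
  · simp only [← hf]
    exact Gamma_add_div_Gamma_strictMonoOn hs₀ hx₁0 hx₂0 hx

theorem y_strictAnti_Iio_one : StrictAntiOn y (Set.Iio 1) := by
  intro ν₁ hν₁ ν₂ hν₂ hν
  have hmono := Gamma_add_div_Gamma_strictMonoOn_Ioi_neg (s := 1 / 2) (by norm_num) (by norm_num)
  have hlt := hmono (a := -ν₂ / 2) (b := -ν₁ / 2) (by rw [mem_Ioi]; linarith [mem_Iio.1 hν₂])
    (by rw [mem_Ioi]; linarith [mem_Iio.1 hν₁]) (by linarith)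
  simpa only [y, show ∀ ν : ℝ, (1 - ν) / 2 = -ν / 2 + 1 / 2 from fun ν => by ring] using hlt
end

section
/- The function y(ν) = Γ((1−ν)/2)/Γ(−ν/2) is strictly decreasing on each interval (2M−1, 2M+1) for M = 1, 2, 3, …. -/
/-!
By the reflection formula, on an interval where `cos (π ν / 2) ≠ 0` and `ν > 1` we have
`y ν = -tan (π u) · R u` with `u = ν / 2` and `R u = Γ(u + 1) / Γ(u + 1/2) > 0`. Writing `ψ`
for the digamma function, the `u`-derivative of this is
`-R u · (π (1 + tan² (π u)) + tan (π u) · (ψ(u + 1) - ψ(u + 1/2)))`. Log-convexity of `Γ`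
makes `ψ` monotone, and with `ψ(u + 1) = ψ u + 1/u` this puts `ψ(u + 1) - ψ(u + 1/2)` in
`[0, 1/u) ⊆ [0, 2)`; the bracket is then a positive definite quadratic in `tan (π u)`.
-/

open Real

open Set

namespace Real

noncomputable def digamma (x : ℝ) : ℝ := logDeriv Gamma x

theorem differentiableAt_Gamma_of_pos {x : ℝ} (hx : 0 < x) : DifferentiableAt ℝ Gamma x :=
  differentiableAt_Gamma fun m h => by linarith [h ▸ hx, (Nat.cast_nonneg m : (0 : ℝ) ≤ m)]

theorem hasDerivAt_Gamma_of_pos {x : ℝ} (hx : 0 < x) :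
    HasDerivAt Gamma (Gamma x * digamma x) x := by
  rw [digamma, logDeriv_apply, mul_div_cancel₀ _ (Gamma_pos_of_pos hx).ne']
  exact (differentiableAt_Gamma_of_pos hx).hasDerivAt

theorem monotoneOn_digamma : MonotoneOn digamma (Ioi 0) := by
  have hd (x : ℝ) (hx : x ∈ Ioi 0) :=
    (differentiableAt_Gamma_of_pos hx).log (Gamma_pos_of_pos hx).ne'
  refine (convexOn_log_Gamma.monotoneOn_deriv hd).congr fun x hx => ?_
  exact deriv_log_comp_eq_logDeriv (differentiableAt_Gamma_of_pos hx) (Gamma_pos_of_pos hx).ne'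

theorem digamma_add_one {x : ℝ} (hx : ∀ m : ℕ, x ≠ -m) :
    digamma (x + 1) = digamma x + x⁻¹ := by
  have hx0 : x ≠ 0 := by simpa using hx 0
  have hx1 : ∀ m : ℕ, x + 1 ≠ -m := fun m h => hx (m + 1) (by push_cast; linarith)
  have hΓ' : HasDerivAt Gamma (deriv Gamma x) x := (differentiableAt_Gamma hx).hasDerivAt
  have hshift : HasDerivAt (fun t => Gamma (t + 1)) (deriv Gamma (x + 1)) x :=
    (differentiableAt_Gamma hx1).hasDerivAt.comp_add_const x 1
  have hrec : HasDerivAt (fun t => Gamma (t + 1)) (1 * Gamma x + x * deriv Gamma x) x := by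
    refine ((hasDerivAt_id x).mul hΓ').congr_of_eventuallyEq ?_
    filter_upwards [eventually_ne_nhds hx0] with t ht using Gamma_add_one ht
  have hΓ : Gamma x ≠ 0 := Gamma_ne_zero hx
  rw [digamma, digamma, logDeriv_apply, logDeriv_apply, hshift.unique hrec, Gamma_add_one hx0]
  field_simp
  ring

end Real

noncomputable def gammaRatio (u : ℝ) : ℝ := Gamma (u + 1) / Gamma (u + 1 / 2)

section gammaRatio

variable {u : ℝ}

theorem gammaRatio_pos (hu : -1 / 2 < u) : 0 < gammaRatio u :=
  div_pos (Gamma_pos_of_pos (by linarith)) (Gamma_pos_of_pos (by linarith))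

theorem hasDerivAt_gammaRatio (hu : -1 / 2 < u) :
    HasDerivAt gammaRatio (gammaRatio u * (digamma (u + 1) - digamma (u + 1 / 2))) u := by
  have hA := (hasDerivAt_Gamma_of_pos (x := u + 1) (by linarith)).comp_add_const u 1
  have hB := (hasDerivAt_Gamma_of_pos (x := u + 1 / 2) (by linarith)).comp_add_const u (1 / 2)
  have hB0 : Gamma (u + 1 / 2) ≠ 0 := (Gamma_pos_of_pos (by linarith)).ne'
  refine (hA.fun_div hB hB0).congr_deriv ?_
  rw [gammaRatio]
  field_simp

theorem digamma_add_one_sub_digamma_add_half_nonneg (hu : -1 / 2 < u) :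
    0 ≤ digamma (u + 1) - digamma (u + 1 / 2) :=
  sub_nonneg.2 <|
    monotoneOn_digamma (mem_Ioi.2 (by linarith)) (mem_Ioi.2 (by linarith)) (by linarith)

theorem digamma_add_one_sub_digamma_add_half_le (hu : 0 < u) :
    digamma (u + 1) - digamma (u + 1 / 2) ≤ u⁻¹ := by
  have hmono : digamma u ≤ digamma (u + 1 / 2) :=
    monotoneOn_digamma hu (mem_Ioi.2 (by linarith)) (by linarith)
  have hrec : digamma (u + 1) = digamma u + u⁻¹ :=
    digamma_add_one fun m h => by linarith [h ▸ hu, (Nat.cast_nonneg m : (0 : ℝ) ≤ m)]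
  linarith

end gammaRatio

/-- At integers `u` both sides vanish (`Gamma (-u) = 0`, and `π / sin (π * u) = 0` since
`x / 0 = 0`), so no case split is needed. -/
theorem Gamma_half_sub_div_Gamma_neg {u : ℝ} (hu : -1 / 2 < u) (hcos : cos (π * u) ≠ 0) :
    Gamma (1 / 2 - u) / Gamma (-u) = -tan (π * u) * gammaRatio u := by
  have hA : Gamma (u + 1) ≠ 0 := (Gamma_pos_of_pos (by linarith)).ne'
  have hB : Gamma (u + 1 / 2) ≠ 0 := (Gamma_pos_of_pos (by linarith)).ne'
  have hreflA : Gamma (-u) * Gamma (u + 1) = -(π / sin (π * u)) := by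
    simpa [sub_neg_eq_add, add_comm, mul_neg, sin_neg, div_neg] using
      Gamma_mul_Gamma_one_sub (-u)
  have hreflB : Gamma (1 / 2 - u) * Gamma (u + 1 / 2) = π / cos (π * u) := by
    have := Gamma_mul_Gamma_one_sub (u + 1 / 2)
    rwa [show 1 - (u + 1 / 2) = 1 / 2 - u by ring, show π * (u + 1 / 2) = π * u + π / 2 by ring,
      sin_add_pi_div_two, mul_comm] at this
  rw [eq_div_of_mul_eq hA hreflA, eq_div_of_mul_eq hB hreflB, gammaRatio, tan_eq_sin_div_cos]
  field_simp

theorem hasDerivAt_neg_tan_mul_gammaRatio {u : ℝ} (hu : -1 / 2 < u) (hcos : cos (π * u) ≠ 0) :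
    HasDerivAt (fun v => -tan (π * v) * gammaRatio v)
      (-gammaRatio u * (π * (1 + tan (π * u) ^ 2) +
        tan (π * u) * (digamma (u + 1) - digamma (u + 1 / 2)))) u := by
  have htan : HasDerivAt (fun v => tan (π * v)) (1 / cos (π * u) ^ 2 * π) u := by
    simpa [Function.comp_def] using (hasDerivAt_tan hcos).comp u ((hasDerivAt_id u).const_mul π)
  refine (htan.fun_neg.fun_mul (hasDerivAt_gammaRatio hu)).congr_deriv ?_
  rw [one_div, ← inv_one_add_tan_sq hcos, inv_inv]
  ring

theorem strictAntiOn_Gamma_half_sub_div_Gamma_neg {s : Set ℝ} (hs : Convex ℝ s)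
    (hs_half : s ⊆ Ioi (1 / 2)) (hcos : ∀ u ∈ s, cos (π * u) ≠ 0) :
    StrictAntiOn (fun u => Gamma (1 / 2 - u) / Gamma (-u)) s := by
  have hderiv (u : ℝ) (hu : u ∈ s) := hasDerivAt_neg_tan_mul_gammaRatio
    (by linarith [mem_Ioi.1 (hs_half hu)]) (hcos u hu)
  refine (strictAntiOn_of_hasDerivWithinAt_neg hs
    (fun u hu => (hderiv u hu).continuousAt.continuousWithinAt)
    (fun u hu => (hderiv u (interior_subset hu)).hasDerivWithinAt) fun u hu => ?_).congr
    fun u hu =>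
      (Gamma_half_sub_div_Gamma_neg (by linarith [mem_Ioi.1 (hs_half hu)]) (hcos u hu)).symm
  have hu : 1 / 2 < u := hs_half (interior_subset hu)
  have hc₀ := digamma_add_one_sub_digamma_add_half_nonneg (u := u) (by linarith)
  have hc₁ : digamma (u + 1) - digamma (u + 1 / 2) < 2 :=
    (digamma_add_one_sub_digamma_add_half_le (by linarith)).trans_lt
      ((inv_lt_comm₀ (by linarith) two_pos).2 (by linarith))
  have hquad : 0 < π * (1 + tan (π * u) ^ 2) +
      tan (π * u) * (digamma (u + 1) - digamma (u + 1 / 2)) := by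
    nlinarith [pi_gt_three, sq_nonneg (tan (π * u) + (digamma (u + 1) - digamma (u + 1 / 2)) / 6)]
  simpa only [neg_mul, neg_lt_zero] using mul_pos (gammaRatio_pos (by linarith)) hquad

theorem cos_pi_mul_ne_zero_of_mem_Ioo {M : ℤ} {u : ℝ}
    (hu : u ∈ Ioo (M - 1 / 2 : ℝ) (M + 1 / 2)) : cos (π * u) ≠ 0 := by
  rw [Ne, cos_eq_zero_iff]
  rintro ⟨k, hk⟩
  have hu' : u = k + 1 / 2 := by
    have := pi_pos
    field_simp at hk
    linarith
  have h₁ : (M : ℝ) - 1 < k := by linarith [hu.1]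
  have h₂ : (k : ℝ) < M := by linarith [hu.2]
  norm_cast at h₁ h₂
  omega

theorem y_strictAnti_Ioo (M : ℕ) (hM : 1 ≤ M) :
    StrictAntiOn y (Set.Ioo (2 * (M : ℝ) - 1) (2 * (M : ℝ) + 1)) := by
  have hM' : (1 : ℝ) ≤ M := by exact_mod_cast hM
  have hhalf : StrictAntiOn (fun u => Gamma (1 / 2 - u) / Gamma (-u))
      (Ioo ((M : ℤ) - 1 / 2 : ℝ) ((M : ℤ) + 1 / 2)) :=
    strictAntiOn_Gamma_half_sub_div_Gamma_neg (convex_Ioo _ _)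
      (fun u hu => by rw [Int.cast_natCast] at hu; exact mem_Ioi.2 (by linarith [hu.1]))
      fun u hu => cos_pi_mul_ne_zero_of_mem_Ioo hu
  have hmaps : MapsTo (· / 2) (Ioo (2 * (M : ℝ) - 1) (2 * M + 1))
      (Ioo ((M : ℤ) - 1 / 2 : ℝ) ((M : ℤ) + 1 / 2)) := fun ν hν => by
    simp only [mem_Ioo, Int.cast_natCast] at hν ⊢
    constructor <;> linarith [hν.1, hν.2]
  convert hhalf.comp_strictMonoOn (fun a _ b _ h => div_lt_div_of_pos_right h two_pos) hmaps using 1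
  funext ν
  rw [y, Function.comp_apply, show (1 - ν) / 2 = 1 / 2 - ν / 2 by ring, neg_div]
end
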